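/- arXiv:2002.12057 — 7 statements merged into one kernel-verified Lean document; each statement's English description precedes it below -/
import Mathlib

section
/- Let τ > 0, μ ∈ ℝ, i ∈ {1,2}, and define v(s) = (2/√τ)·( (−2μ/√τ)·(1 − cos(√τ·s)) + (−1)^i·sin(√τ·s) ). Then there exists a unique s_i ∈ (0, 2π/√τ) such that v(s_i) = 0 and (−1)^i·v(s) > 0 for all s ∈ (0, s_i). -/
/-! With `x = √τ s / 2` and `a = (-1)^i (-2μ/√τ)`, the half-angle formulas give
`(-1)^i v(s) = (4/√τ) sin x (a sin x + cos x)`, and the phase shift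
`a sin x + cos x = √(1 + a²) sin (x₀ - x)` with `x₀ = π/2 + arctan a ∈ (0, π)` shows that on
`0 < x < π` this vanishes only at `x = x₀` and is positive before it. -/

open Real Set

namespace Real

theorem mul_one_sub_cos_two_mul_add_sin_two_mul (a x : ℝ) :
    a * (1 - cos (2 * x)) + sin (2 * x) = 2 * sin x * (a * sin x + cos x) := by
  rw [cos_two_mul, sin_two_mul]
  linear_combination -2 * a * sin_sq_add_cos_sq x

theorem mul_sin_add_cos_eq_sqrt_mul_sin (a x : ℝ) :
    a * sin x + cos x = √(1 + a ^ 2) * sin (π / 2 + arctan a - x) := by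
  have hA : 0 < √(1 + a ^ 2) := sqrt_pos.mpr (by positivity)
  rw [show π / 2 + arctan a - x = π / 2 - (x - arctan a) by ring,
    sin_pi_div_two_sub, cos_sub, cos_arctan, sin_arctan]
  field_simp
  ring

theorem pi_div_two_add_arctan_mem_Ioo (a : ℝ) : π / 2 + arctan a ∈ Ioo 0 π :=
  ⟨by linarith [neg_pi_div_two_lt_arctan a], by linarith [arctan_lt_pi_div_two a]⟩

theorem existsUnique_zero_of_sin_mul_sin_sub {r c x₀ : ℝ} (hr : 0 < r) (hc : 0 < c)
    (hx₀ : x₀ ∈ Ioo 0 π) {w : ℝ → ℝ} (hw : ∀ s, w s = c * sin (r * s / 2) * sin (x₀ - r * s / 2)) :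
    ∃! s₀ : ℝ, s₀ ∈ Ioo 0 (2 * π / r) ∧ w s₀ = 0 ∧ ∀ s ∈ Ioo 0 s₀, 0 < w s := by
  obtain ⟨hx₀_pos, hx₀_lt⟩ := hx₀
  have half_mem {s b : ℝ} (hs : s ∈ Ioo 0 (2 * b / r)) : r * s / 2 ∈ Ioo 0 b := by
    obtain ⟨hs₀, hs₁⟩ := hs
    rw [lt_div_iff₀ hr] at hs₁
    constructor <;> nlinarith
  have hroot : r * (2 * x₀ / r) / 2 = x₀ := by field_simp
  refine ⟨2 * x₀ / r, ⟨?_, ?_, ?_⟩, ?_⟩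
  · exact ⟨by positivity, by gcongr⟩
  · rw [hw, hroot, sub_self, sin_zero, mul_zero]
  · intro s hs
    obtain ⟨ht₀, ht₁⟩ := half_mem hs
    rw [hw]
    have := sin_pos_of_pos_of_lt_pi ht₀ (by linarith)
    have := sin_pos_of_pos_of_lt_pi (sub_pos.mpr ht₁) (by linarith)
    positivity
  · rintro s ⟨hs, hzero, -⟩
    obtain ⟨ht₀, ht₁⟩ := half_mem (b := π) hs
    have hsin : sin (r * s / 2) ≠ 0 := (sin_pos_of_pos_of_lt_pi ht₀ ht₁).ne'
    rw [hw, mul_eq_zero, mul_eq_zero] at hzero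
    rcases hzero with (hc0 | h) | h
    · exact absurd hc0 hc.ne'
    · exact absurd h hsin
    · rw [sin_eq_zero_iff_of_lt_of_lt (by linarith) (by linarith), sub_eq_zero] at h
      field_simp
      linarith

end Real

theorem stmt_2 (τ μ : ℝ) (hτ : 0 < τ) (i : ℕ) (hi : i = 1 ∨ i = 2) (v : ℝ → ℝ)
    (hv : ∀ s : ℝ, v s = (2 / Real.sqrt τ) *
      ((-2 * μ / Real.sqrt τ) * (1 - Real.cos (Real.sqrt τ * s))
        + (-1 : ℝ) ^ i * Real.sin (Real.sqrt τ * s))) :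
    ∃! si : ℝ, si ∈ Set.Ioo 0 (2 * π / Real.sqrt τ) ∧ v si = 0 ∧
      ∀ s ∈ Set.Ioo 0 si, 0 < (-1 : ℝ) ^ i * v s := by
  set r := √τ
  set ε : ℝ := (-1) ^ i
  have hr : 0 < r := sqrt_pos.mpr hτ
  have hε : ε * ε = 1 := by rcases hi with rfl | rfl <;> norm_num [ε]
  set a := ε * (-2 * μ / r)
  have hεv : ∀ s, ε * v s = 4 * √(1 + a ^ 2) / r * sin (r * s / 2)
      * sin (π / 2 + arctan a - r * s / 2) := by
    intro s
    have hhalf := mul_one_sub_cos_two_mul_add_sin_two_mul a (r * s / 2)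
    have hphase := mul_sin_add_cos_eq_sqrt_mul_sin a (r * s / 2)
    rw [show 2 * (r * s / 2) = r * s by ring] at hhalf
    rw [hv]
    linear_combination
      2 / r * sin (r * s) * hε + 2 / r * hhalf + 4 / r * sin (r * s / 2) * hphase
  have hcoef : 0 < 4 * √(1 + a ^ 2) / r := by positivity
  have hεne : ε ≠ 0 := left_ne_zero_of_mul_eq_one hε
  simpa only [mul_eq_zero, hεne, false_or] using
    existsUnique_zero_of_sin_mul_sin_sub hr hcoef (pi_div_two_add_arctan_mem_Ioo a) hεv
end

section
/- Let τ > 0, μ ∈ ℝ, i ∈ {1,2}, let v(s) = (2/√τ)·( (−2μ/√τ)·(1 − cos(√τ·s)) + (−1)^i·sin(√τ·s) ), and let s_i ∈ (0, 2π/√τ) be the first positive zero of v. Then v(s_i − s) = v(s) for all s ∈ [0, s_i]. -/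
open Real

theorem stmt_3 (τ μ : ℝ) (hτ : 0 < τ) (i : ℕ) (hi : i = 1 ∨ i = 2) (v : ℝ → ℝ)
    (hv : ∀ s : ℝ, v s = (2 / Real.sqrt τ) *
      ((-2 * μ / Real.sqrt τ) * (1 - Real.cos (Real.sqrt τ * s))
        + (-1 : ℝ) ^ i * Real.sin (Real.sqrt τ * s)))
    (si : ℝ) (hsi : si ∈ Set.Ioo 0 (2 * π / Real.sqrt τ)) (hz : v si = 0)
    (hfirst : ∀ s ∈ Set.Ioo 0 si, v s ≠ 0) :
    ∀ s ∈ Set.Icc 0 si, v (si - s) = v s := by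
  intro s hs
  have hc : 0 < Real.sqrt τ := Real.sqrt_pos.mpr hτ
  set c := Real.sqrt τ with hcdef
  set A : ℝ := -2 * μ / c with hA
  set B : ℝ := (-1 : ℝ) ^ i with hB
  have h2c : (2 : ℝ) / c ≠ 0 := by positivity
  have hz' : A * (1 - Real.cos (c * si)) + B * Real.sin (c * si) = 0 := by
    have h := hz
    rw [hv] at h
    rcases mul_eq_zero.mp h with h' | h'
    · exact absurd h' h2c
    · exact h'
  -- bounds on θ = c * si
  have hθpos : 0 < c * si := mul_pos hc hsi.1
  have hθlt : c * si < 2 * π := by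
    have := hsi.2
    rw [lt_div_iff₀ hc] at this
    linarith
  have hshpos : 0 < Real.sin (c * si / 2) :=
    Real.sin_pos_of_pos_of_lt_pi (by linarith) (by linarith)
  have e1 : Real.cos (c * si) = 1 - 2 * Real.sin (c * si / 2) ^ 2 := by
    have h := Real.cos_two_mul (c * si / 2)
    rw [show 2 * (c * si / 2) = c * si by ring] at h
    nlinarith [Real.sin_sq_add_cos_sq (c * si / 2)]
  have e2 : Real.sin (c * si) = 2 * Real.sin (c * si / 2) * Real.cos (c * si / 2) := by
    have h := Real.sin_two_mul (c * si / 2)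
    rw [show 2 * (c * si / 2) = c * si by ring] at h
    linarith
  have K : A * Real.sin (c * si / 2) + B * Real.cos (c * si / 2) = 0 := by
    have h3 : 2 * Real.sin (c * si / 2) *
        (A * Real.sin (c * si / 2) + B * Real.cos (c * si / 2)) = 0 := by
      rw [e1, e2] at hz'
      linear_combination hz'
    rcases mul_eq_zero.mp h3 with h' | h'
    · exact absurd h' (by positivity)
    · exact h'
  rw [hv, hv]
  congr 1
  have P := Real.sin_sq_add_cos_sq (c * si / 2)
  rw [show c * (si - s) = 2 * (c * si / 2) - c * s by ring, Real.cos_sub, Real.sin_sub,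
    Real.cos_two_mul, Real.sin_two_mul]
  linear_combination (2 * Real.sin (c * si / 2) * Real.cos (c * s)
      - 2 * Real.cos (c * si / 2) * Real.sin (c * s)) * K
    - 2 * A * Real.cos (c * s) * P
end

section
/- Let τ > 0, μ ∈ ℝ, i ∈ {1,2}, let v(s) = (2/√τ)·( (−2μ/√τ)·(1 − cos(√τ·s)) + (−1)^i·sin(√τ·s) ), s_i its first positive zero, and define f(s) = (−1)^i·v'(s)/√(4·v(s)² + v'(s)²) on [0, s_i] (the denominator never vanishes there). Then f(s_i − s) = −f(s) for all s ∈ [0, s_i]. -/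
/-!
Write `v s = (2/ω) g(ωs)` with `ω = √τ` and `g x = a (1 - cos x) + b sin x`. The zero `x₀ = ω sᵢ`
of `g` (with `cos x₀ ≠ 1`, since `0 < x₀ < 2π`) forces `a sin x₀ + b (1 + cos x₀) = 0`, and the two
relations together make `g` even and `g'` odd about `x₀ / 2`. Since `b = ±1`, `g` and `g'` have
no common zero, so the denominator of `f` never vanishes and `f` is odd about `sᵢ / 2`.
-/

open Real

lemma hasDerivAt_mul_one_sub_cos_add_mul_sin (c a b ω s : ℝ) :
    HasDerivAt (fun x => c * (a * (1 - cos (ω * x)) + b * sin (ω * x)))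
      (c * ω * (a * sin (ω * s) + b * cos (ω * s))) s := by
  have hlin : HasDerivAt (fun x : ℝ => ω * x) ω s := by
    simpa using (hasDerivAt_id s).const_mul ω
  have hcos := (hasDerivAt_cos (ω * s)).comp s hlin
  have hsin := (hasDerivAt_sin (ω * s)).comp s hlin
  exact ((((hasDerivAt_const s 1).sub hcos).const_mul a).add (hsin.const_mul b)).const_mul c
    |>.congr_deriv (by ring)

lemma mul_sin_add_mul_one_add_cos_eq_zero {a b t : ℝ}
    (h : a * (1 - cos t) + b * sin t = 0) (hcos : cos t ≠ 1) :
    a * sin t + b * (1 + cos t) = 0 := by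
  have hprod : (1 - cos t) * (a * sin t + b * (1 + cos t)) = 0 := by
    linear_combination sin t * h - b * sin_sq_add_cos_sq t
  exact (mul_eq_zero.mp hprod).resolve_left (sub_ne_zero.mpr hcos.symm)

lemma mul_one_sub_cos_add_mul_sin_reflect {a b t : ℝ}
    (h : a * (1 - cos t) + b * sin t = 0) (hcos : cos t ≠ 1) (x : ℝ) :
    a * (1 - cos (t - x)) + b * sin (t - x) = a * (1 - cos x) + b * sin x ∧
      a * sin (t - x) + b * cos (t - x) = -(a * sin x + b * cos x) := by
  have h' := mul_sin_add_mul_one_add_cos_eq_zero h hcos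
  rw [cos_sub, sin_sub]
  constructor
  · linear_combination cos x * h - sin x * h'
  · linear_combination cos x * h' + sin x * h

lemma eq_zero_of_mul_one_sub_cos_add_mul_sin_eq_zero {a b x : ℝ}
    (h : a * (1 - cos x) + b * sin x = 0) (h' : a * sin x + b * cos x = 0) : b = 0 := by
  have hpyth := sin_sq_add_cos_sq x
  have hsum : a * sin x + b = 0 := by linear_combination sin x * h + cos x * h' - b * hpyth
  by_contra hb
  have hcos : cos x = 1 := by
    have : b * (cos x - 1) = 0 := by linear_combination h' - hsum
    linarith [(mul_eq_zero.mp this).resolve_left hb]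
  have hsin : sin x = 0 := by nlinarith
  exact hb (by simpa [hsin] using hsum)

lemma cos_ne_one_of_mem_Ioo {x : ℝ} (hx : x ∈ Set.Ioo 0 (2 * π)) : cos x ≠ 1 := fun h =>
  hx.1.ne' ((cos_eq_one_iff_of_lt_of_lt (by linarith [hx.1, two_pi_pos]) hx.2).mp h)

theorem stmt_4_general (τ μ : ℝ) (hτ : 0 < τ) (i : ℕ) (v : ℝ → ℝ)
    (hv : ∀ s : ℝ, v s = (2 / Real.sqrt τ) *
      ((-2 * μ / Real.sqrt τ) * (1 - Real.cos (Real.sqrt τ * s))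
        + (-1 : ℝ) ^ i * Real.sin (Real.sqrt τ * s)))
    (si : ℝ) (hsi : si ∈ Set.Ioo 0 (2 * π / Real.sqrt τ)) (hz : v si = 0)
    (f : ℝ → ℝ)
    (hf : ∀ s : ℝ, f s =
      (-1 : ℝ) ^ i * deriv v s / Real.sqrt (4 * v s ^ 2 + (deriv v s) ^ 2)) :
    (∀ s ∈ Set.Icc 0 si, 4 * v s ^ 2 + (deriv v s) ^ 2 ≠ 0) ∧
    ∀ s ∈ Set.Icc 0 si, f (si - s) = - f s := by
  set ω := √τ
  set a := -2 * μ / ω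
  set b : ℝ := (-1) ^ i
  have hω : 0 < ω := sqrt_pos.mpr hτ
  have hderiv (s : ℝ) : deriv v s = 2 * (a * sin (ω * s) + b * cos (ω * s)) := by
    rw [show v = _ from funext hv, (hasDerivAt_mul_one_sub_cos_add_mul_sin _ a b ω s).deriv]
    field_simp
  have hzero : a * (1 - cos (ω * si)) + b * sin (ω * si) = 0 :=
    (mul_eq_zero.mp ((hv si).symm.trans hz)).resolve_left (by positivity)
  have hcos : cos (ω * si) ≠ 1 :=
    cos_ne_one_of_mem_Ioo ⟨mul_pos hω hsi.1, by rw [← lt_div_iff₀' hω]; exact hsi.2⟩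
  have hreflect (s : ℝ) := mul_one_sub_cos_add_mul_sin_reflect hzero hcos (ω * s)
  have hv_reflect (s : ℝ) : v (si - s) = v s := by
    rw [hv, hv, mul_sub ω si s, (hreflect s).1]
  have hderiv_reflect (s : ℝ) : deriv v (si - s) = -deriv v s := by
    rw [hderiv, hderiv, mul_sub ω si s, (hreflect s).2]
    ring
  refine ⟨fun s _ hsum => ?_, fun s _ => ?_⟩
  · have hv0 : v s = 0 := by nlinarith [sq_nonneg (v s), sq_nonneg (deriv v s)]
    have hd0 : deriv v s = 0 := by nlinarith [sq_nonneg (v s), sq_nonneg (deriv v s)]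
    refine pow_ne_zero i (neg_ne_zero.mpr one_ne_zero)
      (eq_zero_of_mul_one_sub_cos_add_mul_sin_eq_zero (x := ω * s) (a := a) ?_ ?_)
    · exact (mul_eq_zero.mp ((hv s).symm.trans hv0)).resolve_left (by positivity)
    · linarith [hderiv s]
  · rw [hf, hf, hv_reflect, hderiv_reflect, neg_sq]
    ring

theorem stmt_4 (τ μ : ℝ) (hτ : 0 < τ) (i : ℕ) (hi : i = 1 ∨ i = 2) (v : ℝ → ℝ)
    (hv : ∀ s : ℝ, v s = (2 / Real.sqrt τ) *
      ((-2 * μ / Real.sqrt τ) * (1 - Real.cos (Real.sqrt τ * s))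
        + (-1 : ℝ) ^ i * Real.sin (Real.sqrt τ * s)))
    (si : ℝ) (hsi : si ∈ Set.Ioo 0 (2 * π / Real.sqrt τ)) (hz : v si = 0)
    (hfirst : ∀ s ∈ Set.Ioo 0 si, v s ≠ 0)
    (f : ℝ → ℝ)
    (hf : ∀ s : ℝ, f s =
      (-1 : ℝ) ^ i * deriv v s / Real.sqrt (4 * v s ^ 2 + (deriv v s) ^ 2)) :
    (∀ s ∈ Set.Icc 0 si, 4 * v s ^ 2 + (deriv v s) ^ 2 ≠ 0) ∧
    ∀ s ∈ Set.Icc 0 si, f (si - s) = - f s :=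
  stmt_4_general τ μ hτ i v hv si hsi hz f hf
end

section
/- Let τ > 0, μ ∈ ℝ, set a = √τ, b = −2μ, and let v(s) = (2/a)·( (b/a)·(1 − cos(a·s)) − sin(a·s) ) (the case i = 1). Let s₁ be the first positive zero of v. Then for all s ∈ (0, s₁), one has (a²·v(s)²/4)·(v'/v)'(s) = b·(a·sin(a·s) + b·cos(a·s)) − (a² + b²); in particular, the function s ↦ v'(s)/v(s) is strictly decreasing on (0, s₁). -/
open Real

/-!
By the quotient rule `(v'/v)' = (v''v - v'²)/v²`, and the numerator `v''v - v'²` simplifies,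
via `sin² + cos² = 1`, to `(4/a²)(b(a sin(as) + b cos(as)) - (a² + b²))`. This is negative
because `b(a sin x + b cos x) ≤ |b|√(a² + b²) < a² + b²` when `a ≠ 0`.
-/

noncomputable def profile (a b s : ℝ) : ℝ :=
  (2 / a) * ((b / a) * (1 - cos (a * s)) - sin (a * s))

noncomputable def profileDeriv (a b s : ℝ) : ℝ :=
  2 * ((b / a) * sin (a * s) - cos (a * s))

theorem hasDerivAt_sin_mul (a t : ℝ) :
    HasDerivAt (fun s => sin (a * s)) (cos (a * t) * a) t := by
  simpa using ((hasDerivAt_id t).const_mul a).sin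

theorem hasDerivAt_cos_mul (a t : ℝ) :
    HasDerivAt (fun s => cos (a * s)) (-sin (a * t) * a) t := by
  simpa using ((hasDerivAt_id t).const_mul a).cos

section Profile

variable {a : ℝ} (b : ℝ)

theorem hasDerivAt_profile (ha : a ≠ 0) (t : ℝ) :
    HasDerivAt (profile a b) (profileDeriv a b t) t := by
  have h := ((((hasDerivAt_const t (1 : ℝ)).sub (hasDerivAt_cos_mul a t)).const_mul
    (b / a)).sub (hasDerivAt_sin_mul a t)).const_mul (2 / a)
  refine h.congr_deriv ?_
  unfold profileDeriv
  field_simp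
  ring

theorem hasDerivAt_profileDeriv (ha : a ≠ 0) (t : ℝ) :
    HasDerivAt (profileDeriv a b) (2 * (b * cos (a * t) + a * sin (a * t))) t := by
  have h := (((hasDerivAt_sin_mul a t).const_mul (b / a)).sub
    (hasDerivAt_cos_mul a t)).const_mul 2
  refine h.congr_deriv ?_
  field_simp
  ring

theorem profile_wronskian (ha : a ≠ 0) (s : ℝ) :
    2 * (b * cos (a * s) + a * sin (a * s)) * profile a b s - profileDeriv a b s ^ 2
      = (4 / a ^ 2) * (b * (a * sin (a * s) + b * cos (a * s)) - (a ^ 2 + b ^ 2)) := by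
  simp only [profile, profileDeriv]
  field_simp
  linear_combination (-(4 * b ^ 2 + 4 * a ^ 2)) * sin_sq_add_cos_sq (a * s)

theorem hasDerivAt_logDeriv_profile (ha : a ≠ 0) {s : ℝ} (hs : profile a b s ≠ 0) :
    HasDerivAt (fun t => deriv (profile a b) t / profile a b t)
      ((4 / a ^ 2) * (b * (a * sin (a * s) + b * cos (a * s)) - (a ^ 2 + b ^ 2))
        / profile a b s ^ 2) s := by
  have hderiv : deriv (profile a b) = profileDeriv a b :=
    funext fun t => (hasDerivAt_profile b ha t).deriv
  rw [hderiv, ← profile_wronskian b ha, sq (profileDeriv a b s)]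
  exact (hasDerivAt_profileDeriv b ha s).div (hasDerivAt_profile b ha s) hs

end Profile

/-- Twice the gap is `(b sin x - a)² + (b (1 - cos x))² + a²`. -/
theorem mul_sin_add_mul_cos_lt {a : ℝ} (b x : ℝ) (ha : a ≠ 0) :
    b * (a * sin x + b * cos x) < a ^ 2 + b ^ 2 := by
  have ha2 : 0 < a ^ 2 := by positivity
  nlinarith [sin_sq_add_cos_sq x, sq_nonneg (b * sin x - a), sq_nonneg (b * (1 - cos x))]

theorem stmt_6_general (τ a b : ℝ) (hτ : 0 < τ) (ha : a = Real.sqrt τ)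
    (v : ℝ → ℝ)
    (hv : ∀ s : ℝ, v s = (2 / a) *
      ((b / a) * (1 - Real.cos (a * s)) - Real.sin (a * s)))
    (s₁ : ℝ)
    (hfirst : ∀ s ∈ Set.Ioo 0 s₁, v s ≠ 0) :
    (∀ s ∈ Set.Ioo 0 s₁,
      (a ^ 2 * v s ^ 2 / 4) * deriv (fun t => deriv v t / v t) s
        = b * (a * Real.sin (a * s) + b * Real.cos (a * s)) - (a ^ 2 + b ^ 2)) ∧
    StrictAntiOn (fun t => deriv v t / v t) (Set.Ioo 0 s₁) := by
  have ha0 : a ≠ 0 := (ha ▸ Real.sqrt_pos.mpr hτ).ne'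
  obtain rfl : v = profile a b := funext hv
  have hq := fun s hs => hasDerivAt_logDeriv_profile b ha0 (hfirst s hs)
  refine ⟨fun s hs => ?_, ?_⟩
  · rw [(hq s hs).deriv]
    field_simp [hfirst s hs]
  · refine strictAntiOn_of_deriv_neg (convex_Ioo 0 s₁)
      (fun s hs => (hq s hs).continuousAt.continuousWithinAt) fun s hs => ?_
    rw [interior_Ioo] at hs
    rw [(hq s hs).deriv]
    have hneg := mul_sin_add_mul_cos_lt b (a * s) ha0
    have hv2 : 0 < profile a b s ^ 2 := pow_two_pos_of_ne_zero (hfirst s hs)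
    exact div_neg_of_neg_of_pos (mul_neg_of_pos_of_neg (by positivity) (by linarith)) hv2

theorem stmt_6 (τ μ a b : ℝ) (hτ : 0 < τ) (ha : a = Real.sqrt τ) (hb : b = -2 * μ)
    (v : ℝ → ℝ)
    (hv : ∀ s : ℝ, v s = (2 / a) *
      ((b / a) * (1 - Real.cos (a * s)) - Real.sin (a * s)))
    (s₁ : ℝ) (hs₁ : s₁ ∈ Set.Ioo 0 (2 * π / a)) (hz : v s₁ = 0)
    (hfirst : ∀ s ∈ Set.Ioo 0 s₁, v s ≠ 0) :
    (∀ s ∈ Set.Ioo 0 s₁,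
      (a ^ 2 * v s ^ 2 / 4) * deriv (fun t => deriv v t / v t) s
        = b * (a * Real.sin (a * s) + b * Real.cos (a * s)) - (a ^ 2 + b ^ 2)) ∧
    StrictAntiOn (fun t => deriv v t / v t) (Set.Ioo 0 s₁) :=
  stmt_6_general τ a b hτ ha v hv s₁ hfirst
end

section
/- Let ℓ > √2·π and define φ(ε) = sin(2πε/ℓ). Then φ is ℓ-periodic, ∫₀^ℓ φ(ε) dε = 0, and 2·∫₀^ℓ φ'(ε)² dε − 4·∫₀^ℓ φ(ε)² dε = 4π²/ℓ − 2ℓ < 0. -/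
/-! The substitution u = 2πε/L turns each integral over [0, L] into L/(2π) times one over the
full period [0, 2π], where ∫ sin = 0 and ∫ sin² = ∫ cos² = π. -/

open Real

theorem integral_comp_two_pi_mul_div (f : ℝ → ℝ) {L : ℝ} (hL : L ≠ 0) :
    ∫ x in (0:ℝ)..L, f (2 * π * x / L) = L / (2 * π) * ∫ x in (0:ℝ)..2 * π, f x := by
  have hc : 2 * π / L ≠ 0 := div_ne_zero (by positivity) hL
  simp_rw [mul_div_right_comm (2 * π)]
  rw [intervalIntegral.integral_comp_mul_left f hc, smul_eq_mul, inv_div, mul_zero,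
    div_mul_cancel₀ _ hL]

theorem integral_sin_two_pi_mul_div {L : ℝ} (hL : L ≠ 0) :
    ∫ x in (0:ℝ)..L, sin (2 * π * x / L) = 0 := by
  simp [integral_comp_two_pi_mul_div sin hL]

theorem integral_sin_two_pi_mul_div_sq {L : ℝ} (hL : L ≠ 0) :
    ∫ x in (0:ℝ)..L, sin (2 * π * x / L) ^ 2 = L / 2 := by
  rw [integral_comp_two_pi_mul_div (sin · ^ 2) hL, integral_sin_sq]
  field_simp
  simp

theorem integral_cos_two_pi_mul_div_sq {L : ℝ} (hL : L ≠ 0) :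
    ∫ x in (0:ℝ)..L, cos (2 * π * x / L) ^ 2 = L / 2 := by
  rw [integral_comp_two_pi_mul_div (cos · ^ 2) hL, integral_cos_sq]
  field_simp
  simp

theorem deriv_sin_two_pi_mul_div (L x : ℝ) :
    deriv (fun x => sin (2 * π * x / L)) x = 2 * π / L * cos (2 * π * x / L) := by
  have h : HasDerivAt (fun x => 2 * π * x / L) (2 * π / L) x := by
    simpa using ((hasDerivAt_id x).const_mul (2 * π)).div_const L
  rw [h.sin.deriv, mul_comm]

theorem periodic_sin_two_pi_mul_div {L : ℝ} (hL : L ≠ 0) :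
    Function.Periodic (fun x => sin (2 * π * x / L)) L := by
  intro x
  simp only [mul_add, add_div, mul_div_cancel_right₀ _ hL, sin_add_two_pi]

theorem four_pi_sq_div_sub_two_mul_neg {L : ℝ} (hL : √2 * π < L) :
    4 * π ^ 2 / L - 2 * L < 0 := by
  have hL0 : 0 < L := lt_trans (by positivity) hL
  have hsq : 2 * π ^ 2 < L ^ 2 := by
    calc 2 * π ^ 2 = (√2 * π) ^ 2 := by rw [mul_pow, sq_sqrt zero_le_two]
      _ < L ^ 2 := pow_lt_pow_left₀ hL (by positivity) two_ne_zero
  rw [div_sub' hL0.ne', div_neg_iff]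
  exact Or.inr ⟨by linarith, hL0⟩

theorem stmt_10 (L : ℝ) (hL : Real.sqrt 2 * π < L) (φ : ℝ → ℝ)
    (hφ : ∀ ε : ℝ, φ ε = Real.sin (2 * π * ε / L)) :
    Function.Periodic φ L ∧ (∫ ε in (0:ℝ)..L, φ ε) = 0 ∧
    2 * (∫ ε in (0:ℝ)..L, (deriv φ ε) ^ 2) - 4 * (∫ ε in (0:ℝ)..L, (φ ε) ^ 2)
      = 4 * π ^ 2 / L - 2 * L ∧
    4 * π ^ 2 / L - 2 * L < 0 := by
  have hL0 : L ≠ 0 := (lt_trans (by positivity) hL).ne'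
  obtain rfl : φ = fun ε => sin (2 * π * ε / L) := funext hφ
  refine ⟨periodic_sin_two_pi_mul_div hL0, integral_sin_two_pi_mul_div hL0, ?_,
    four_pi_sq_div_sub_two_mul_neg hL⟩
  simp_rw [deriv_sin_two_pi_mul_div, mul_pow]
  rw [intervalIntegral.integral_const_mul, integral_cos_two_pi_mul_div_sq hL0,
    integral_sin_two_pi_mul_div_sq hL0]
  field_simp
  ring
end

section
/- Let ε₀, σ > 0, let ρ : [−ε₀, ε₀] → ℝ be continuously differentiable, and let v : [−ε₀, ε₀] × [−σ, σ] → ℝ be continuously differentiable with v(ε, 0) = 0 and (∂v/∂s)(ε, 0) = −2 for all ε. Define, for small r, A(r) = ∫_{−ε₀}^{ε₀} ∫_{−σ'}^{σ'} |r·ρ'(ε) + v(ε, s)| ds dε for a suitable σ' ∈ (0, σ] (chosen so that ∂v/∂s < 0 on [−ε₀,ε₀]×[−σ',σ']). Then A is twice differentiable at r = 0 and A''(0) = ∫_{−ε₀}^{ε₀} ρ'(ε)² dε. -/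
/-!
Because `∂v/∂s (ε, 0) = -2`, on a thin enough rectangle `∂v/∂s ≤ -1`, so `c + v ε s` changes sign
exactly once in `s`, at `S ε c := (v ε)⁻¹ (-c)`. Differentiating under the integral sign gives
`A'(r) = ∫ ρ' ε * ∫ sign (r ρ' ε + v ε s) ds dε`, and the inner integral is `2 * S ε (r ρ' ε)`.
By the inverse function theorem `∂S/∂c (ε, 0) = -1 / (∂v/∂s) (ε, 0) = 1/2`, and since `S ε` is
`1`-Lipschitz one may differentiate under the integral once more: `A''(0) = ∫ ρ'(ε)² dε`.
-/

open MeasureTheory Set Filter Function Metric intervalIntegral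
open scoped NNReal Topology Interval

theorem monotone_coe_sign : Monotone fun x : ℝ => (SignType.sign x : ℝ) := by
  intro a b hab
  rcases lt_trichotomy a 0 with ha | ha | ha <;> rcases lt_trichotomy b 0 with hb | hb | hb <;>
    simp [ha, hb] <;> linarith

theorem ae_imp_ne_of_injOn {α β : Type*} [MeasurableSpace α] {μ : Measure α}
    [NullSingletonClass μ] {f : α → β} {s : Set α} (hf : InjOn f s) (y : β) :
    ∀ᵐ x ∂μ, x ∈ s → f x ≠ y := by
  have hsub : {x | x ∈ s ∧ f x = y}.Subsingleton := fun x hx x' hx' =>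
    hf hx.1 hx'.1 (hx.2.trans hx'.2.symm)
  refine ae_iff.2 (measure_mono_null (fun x hx => ?_) (hsub.measure_zero μ))
  simpa using hx

theorem eventually_forall_mem_Icc_lt {X : Type*} [TopologicalSpace X] {K : Set X}
    (hK : IsCompact K) {φ : X → ℝ → ℝ} (hφ : Continuous (uncurry φ)) {c : ℝ}
    (h0 : ∀ x ∈ K, φ x 0 < c) : ∀ᶠ δ in 𝓝[>] 0, ∀ x ∈ K, ∀ s ∈ Icc (-δ) δ, φ x s < c := by
  obtain ⟨u, t, -, ht, hKu, h0t, hut⟩ := generalized_tube_lemma hK isCompact_singleton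
    (isOpen_lt hφ continuous_const) (by rintro ⟨x, s⟩ ⟨hx, rfl⟩; exact h0 x hx)
  obtain ⟨δ₀, hδ₀, hball⟩ := Metric.isOpen_iff.1 ht 0 (h0t rfl)
  filter_upwards [Ioo_mem_nhdsGT hδ₀] with δ hδ x hx s hs
  refine hut (show (x, s) ∈ u ×ˢ t from ⟨hKu hx, hball ?_⟩)
  rw [mem_ball_zero_iff, Real.norm_eq_abs]
  exact (abs_le.2 hs).trans_lt hδ.2

theorem continuous_uncurry_deriv {v : ℝ → ℝ → ℝ} (hv : ContDiff ℝ 1 (uncurry v)) :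
    Continuous (uncurry fun ε s => deriv (v ε) s) := by
  have hfd := ContDiff.fderiv (f := fun (p : ℝ × ℝ) s => v p.1 s) (n := 0)
    (hv.comp (contDiff_fst.fst.prodMk contDiff_snd)) contDiff_snd le_rfl
  exact (hfd.continuous.clm_apply continuous_const).congr fun p => fderiv_apply_one_eq_deriv

theorem antitoneOn_add_id_of_deriv_le {w : ℝ → ℝ} {D : Set ℝ} (hD : Convex ℝ D)
    (hw : Differentiable ℝ w) (hw' : ∀ s ∈ interior D, deriv w s ≤ -1) :
    AntitoneOn (fun s => w s + s) D :=
  antitoneOn_of_deriv_nonpos hD (hw.continuous.add continuous_id).continuousOn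
    (hw.add differentiable_id).differentiableOn fun s hs => by
      have hd : HasDerivAt (fun s => w s + s) (deriv w s + 1) s :=
        (hw s).hasDerivAt.add (hasDerivAt_id' s)
      linarith [hd.deriv, hw' s hs]

theorem lipschitzWith_abs_add_const (a : ℝ) : LipschitzWith 1 fun c : ℝ => |c + a| :=
  LipschitzWith.of_dist_le_mul fun x y => by
    rw [NNReal.coe_one, one_mul, Real.dist_eq, Real.dist_eq]
    calc |(|x + a|) - (|y + a|)| ≤ |(x + a) - (y + a)| := abs_abs_sub_abs_le_abs_sub _ _
      _ = |x - y| := by ring_nf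

theorem lipschitzWith_integral_abs_add {f : ℝ → ℝ} (hf : Continuous f) (a b : ℝ) :
    LipschitzWith (Real.nnabs (b - a)) fun c => ∫ s in a..b, |c + f s| := by
  refine LipschitzWith.of_dist_le_mul fun x y => ?_
  have hint : ∀ c, IntervalIntegrable (fun s => |c + f s|) volume a b := fun c =>
    (continuous_const.add hf).abs.intervalIntegrable a b
  rw [Real.dist_eq, Real.dist_eq, Real.coe_nnabs, mul_comm, ← integral_sub (hint x) (hint y),
    ← Real.norm_eq_abs]
  refine norm_integral_le_of_norm_le_const fun s _ => ?_
  simpa [Real.dist_eq] using (lipschitzWith_abs_add_const (f s)).dist_le_mul x y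

theorem hasDerivAt_integral_abs_add {f : ℝ → ℝ} {a b c₀ : ℝ} (hf : Continuous f)
    (hf₀ : ∀ᵐ s, s ∈ Ι a b → c₀ + f s ≠ 0) :
    HasDerivAt (fun c => ∫ s in a..b, |c + f s|)
      (∫ s in a..b, (SignType.sign (c₀ + f s) : ℝ)) c₀ := by
  refine (hasDerivAt_integral_of_dominated_loc_of_lip (F := fun c s => |c + f s|)
    (bound := fun _ => 1) univ_mem
    (Eventually.of_forall fun c => (continuous_const.add hf).abs.aestronglyMeasurable)
    ((continuous_const.add hf).abs.intervalIntegrable a b)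
    (monotone_coe_sign.measurable.comp (continuous_const.add hf).measurable).aestronglyMeasurable
    (ae_of_all _ fun s _ => ?_) intervalIntegrable_const
    (hf₀.mono fun s hs hsab => (hasDerivAt_abs (hs hsab)).comp_add_const c₀ (f s))).2
  rw [map_one]
  exact (lipschitzWith_abs_add_const (f s)).lipschitzOnWith

theorem integral_sign_of_strictAntiOn {f : ℝ → ℝ} {a b z : ℝ} (hf : StrictAntiOn f (Icc a b))
    (hz : z ∈ Icc a b) (hfz : f z = 0) :
    ∫ s in a..b, (SignType.sign (f s) : ℝ) = (z - a) - (b - z) := by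
  have h₁ : EqOn (fun s => (SignType.sign (f s) : ℝ)) (fun _ => 1) (uIoo a z) := by
    intro s hs
    rw [uIoo_of_le hz.1] at hs
    have : f z < f s := hf ⟨hs.1.le, hs.2.le.trans hz.2⟩ hz hs.2
    simp [hfz ▸ this]
  have h₂ : EqOn (fun s => (SignType.sign (f s) : ℝ)) (fun _ => -1) (uIoo z b) := by
    intro s hs
    rw [uIoo_of_le hz.2] at hs
    have : f s < f z := hf hz ⟨hz.1.trans hs.1.le, hs.2.le⟩ hs.1
    simp [hfz ▸ this]
  rw [← integral_add_adjacent_intervals (intervalIntegrable_const.congr_uIoo h₁.symm)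
    (intervalIntegrable_const.congr_uIoo h₂.symm), integral_congr_uIoo h₁, integral_congr_uIoo h₂,
    intervalIntegral.integral_const, intervalIntegral.integral_const, smul_eq_mul, smul_eq_mul]
  ring

section AntitoneAddId

/-! `AntitoneOn (fun s => w s + s) I` is the derivative-free form of `w' ≤ -1` on `I`. -/

variable {w : ℝ → ℝ}

theorem sub_le_sub_of_antitoneOn_add_id {I : Set ℝ} (hw : AntitoneOn (fun s => w s + s) I)
    {s₁ s₂ : ℝ} (h₁ : s₁ ∈ I) (h₂ : s₂ ∈ I) (h : s₁ ≤ s₂) : s₂ - s₁ ≤ w s₁ - w s₂ := by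
  have := hw h₁ h₂ h
  simp only at this
  linarith

theorem strictAntiOn_of_antitoneOn_add_id {I : Set ℝ} (hw : AntitoneOn (fun s => w s + s) I) :
    StrictAntiOn w I := fun _ h₁ _ h₂ h => by
  linarith [sub_le_sub_of_antitoneOn_add_id hw h₁ h₂ h.le]

theorem abs_sub_le_abs_sub_of_antitoneOn_add_id {I : Set ℝ}
    (hw : AntitoneOn (fun s => w s + s) I) {s₁ s₂ : ℝ} (h₁ : s₁ ∈ I) (h₂ : s₂ ∈ I) :
    |s₁ - s₂| ≤ |w s₁ - w s₂| := by
  rcases le_total s₁ s₂ with h | h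
  · rw [abs_sub_comm s₁, abs_of_nonneg (sub_nonneg.2 h)]
    exact (sub_le_sub_of_antitoneOn_add_id hw h₁ h₂ h).trans (le_abs_self _)
  · rw [abs_of_nonneg (sub_nonneg.2 h), abs_sub_comm]
    exact (sub_le_sub_of_antitoneOn_add_id hw h₂ h₁ h).trans (le_abs_self _)

variable {σ : ℝ}

theorem exists_mem_Icc_eq_of_antitoneOn_add_id (hw : AntitoneOn (fun s => w s + s) (Icc (-σ) σ))
    (hwc : ContinuousOn w (Icc (-σ) σ)) (hw0 : w 0 = 0) {y : ℝ} (hy : |y| < σ) :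
    ∃ s ∈ Icc (-σ) σ, w s = y := by
  have hσ : 0 ≤ σ := (abs_nonneg y).trans hy.le
  have h0 : (0 : ℝ) ∈ Icc (-σ) σ := ⟨neg_nonpos.2 hσ, hσ⟩
  have hright := sub_le_sub_of_antitoneOn_add_id hw h0 (right_mem_Icc.2 (by linarith)) hσ
  have hleft := sub_le_sub_of_antitoneOn_add_id hw (left_mem_Icc.2 (by linarith)) h0
    (neg_nonpos.2 hσ)
  rw [abs_lt] at hy
  exact intermediate_value_Icc' (by linarith) hwc ⟨by linarith, by linarith⟩

theorem invFunOn_zero_of_antitoneOn_add_id (hw : AntitoneOn (fun s => w s + s) (Icc (-σ) σ))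
    (hw0 : w 0 = 0) (hσ : 0 ≤ σ) : invFunOn w (Icc (-σ) σ) 0 = 0 := by
  simpa [hw0] using
    (strictAntiOn_of_antitoneOn_add_id hw).injOn.leftInvOn_invFunOn ⟨neg_nonpos.2 hσ, hσ⟩

theorem lipschitzOnWith_invFunOn_of_antitoneOn_add_id
    (hw : AntitoneOn (fun s => w s + s) (Icc (-σ) σ)) (hwc : ContinuousOn w (Icc (-σ) σ))
    (hw0 : w 0 = 0) : LipschitzOnWith 1 (invFunOn w (Icc (-σ) σ)) (ball 0 σ) := by
  refine LipschitzOnWith.of_dist_le_mul fun y₁ hy₁ y₂ hy₂ => ?_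
  rw [mem_ball_zero_iff, Real.norm_eq_abs] at hy₁ hy₂
  obtain ⟨hm₁, he₁⟩ := invFunOn_pos (exists_mem_Icc_eq_of_antitoneOn_add_id hw hwc hw0 hy₁)
  obtain ⟨hm₂, he₂⟩ := invFunOn_pos (exists_mem_Icc_eq_of_antitoneOn_add_id hw hwc hw0 hy₂)
  simpa [Real.dist_eq, he₁, he₂] using abs_sub_le_abs_sub_of_antitoneOn_add_id hw hm₁ hm₂

theorem hasDerivAt_invFunOn_of_antitoneOn_add_id
    (hw : AntitoneOn (fun s => w s + s) (Icc (-σ) σ)) (hwc : ContinuousOn w (Icc (-σ) σ))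
    (hw0 : w 0 = 0) (hσ : 0 < σ) {w' : ℝ} (hw' : HasDerivAt w w' 0) (hw'0 : w' ≠ 0) :
    HasDerivAt (invFunOn w (Icc (-σ) σ)) w'⁻¹ 0 := by
  have hball : ball (0 : ℝ) σ ∈ 𝓝 0 := ball_mem_nhds 0 hσ
  refine HasDerivAt.of_local_left_inverse
    ((lipschitzOnWith_invFunOn_of_antitoneOn_add_id hw hwc hw0).continuousOn.continuousAt hball)
    (by rwa [invFunOn_zero_of_antitoneOn_add_id hw hw0 hσ.le]) hw'0 ?_
  filter_upwards [hball] with y hy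
  rw [mem_ball_zero_iff, Real.norm_eq_abs] at hy
  exact (invFunOn_pos (exists_mem_Icc_eq_of_antitoneOn_add_id hw hwc hw0 hy)).2

theorem integral_sign_add_eq_of_antitoneOn_add_id
    (hw : AntitoneOn (fun s => w s + s) (Icc (-σ) σ)) (hwc : ContinuousOn w (Icc (-σ) σ))
    (hw0 : w 0 = 0) {c : ℝ} (hc : |c| < σ) :
    ∫ s in (-σ)..σ, (SignType.sign (c + w s) : ℝ) = 2 * invFunOn w (Icc (-σ) σ) (-c) := by
  obtain ⟨hm, he⟩ := invFunOn_pos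
    (exists_mem_Icc_eq_of_antitoneOn_add_id hw hwc hw0 (y := -c) (by rwa [abs_neg]))
  rw [integral_sign_of_strictAntiOn ((strictAntiOn_of_antitoneOn_add_id hw).const_add c) hm
    (by rw [he, add_neg_cancel])]
  ring

theorem lipschitzOnWith_integral_sign_add_of_antitoneOn_add_id
    (hw : AntitoneOn (fun s => w s + s) (Icc (-σ) σ)) (hwc : ContinuousOn w (Icc (-σ) σ))
    (hw0 : w 0 = 0) :
    LipschitzOnWith 2 (fun c => ∫ s in (-σ)..σ, (SignType.sign (c + w s) : ℝ)) (ball 0 σ) := by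
  refine LipschitzOnWith.of_dist_le_mul fun c₁ hc₁ c₂ hc₂ => ?_
  have hT := (lipschitzOnWith_invFunOn_of_antitoneOn_add_id hw hwc hw0).dist_le_mul (-c₁)
    (by simpa using hc₁) (-c₂) (by simpa using hc₂)
  rw [mem_ball_zero_iff, Real.norm_eq_abs] at hc₁ hc₂
  rw [integral_sign_add_eq_of_antitoneOn_add_id hw hwc hw0 hc₁,
    integral_sign_add_eq_of_antitoneOn_add_id hw hwc hw0 hc₂, Real.dist_eq, Real.dist_eq,
    ← mul_sub, abs_mul, abs_two, NNReal.coe_ofNat]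
  rw [Real.dist_eq, Real.dist_eq, NNReal.coe_one, one_mul, ← neg_sub', abs_neg] at hT
  linarith

theorem hasDerivAt_integral_sign_add_of_antitoneOn_add_id
    (hw : AntitoneOn (fun s => w s + s) (Icc (-σ) σ)) (hwc : ContinuousOn w (Icc (-σ) σ))
    (hw0 : w 0 = 0) (hσ : 0 < σ) {w' : ℝ} (hw' : HasDerivAt w w' 0) (hw'0 : w' ≠ 0) :
    HasDerivAt (fun c => ∫ s in (-σ)..σ, (SignType.sign (c + w s) : ℝ)) (-2 / w') 0 := by
  have hT : HasDerivAt (invFunOn w (Icc (-σ) σ)) w'⁻¹ (-0) := by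
    rw [neg_zero]; exact hasDerivAt_invFunOn_of_antitoneOn_add_id hw hwc hw0 hσ hw' hw'0
  refine (((hT.comp 0 (hasDerivAt_neg 0)).const_mul 2).congr_deriv (by ring)
    ).congr_of_eventuallyEq ?_
  filter_upwards [ball_mem_nhds (0 : ℝ) hσ] with c hc
  rw [mem_ball_zero_iff, Real.norm_eq_abs] at hc
  exact integral_sign_add_eq_of_antitoneOn_add_id hw hwc hw0 hc

end AntitoneAddId

theorem measurable_intervalIntegral_sign_add {v : ℝ → ℝ → ℝ} {q : ℝ → ℝ}
    (hv : Continuous (uncurry v)) (hq : Measurable q) (c d : ℝ) :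
    Measurable fun ε => ∫ s in c..d, (SignType.sign (q ε + v ε s) : ℝ) := by
  have hf : StronglyMeasurable fun p : ℝ × ℝ => (SignType.sign (q p.1 + v p.1 p.2) : ℝ) :=
    (monotone_coe_sign.measurable.comp
      ((hq.comp measurable_fst).add hv.measurable)).stronglyMeasurable
  unfold intervalIntegral
  exact hf.integral_prod_right'.measurable.sub hf.integral_prod_right'.measurable

theorem hasDerivAt_intervalIntegral_comp_mul {F : ℝ → ℝ → ℝ} {F' h : ℝ → ℝ}
    {a b r₀ δ : ℝ} {L : ℝ≥0} (hh : Continuous h) (hδ : 0 < δ)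
    (hF_meas : ∀ r, AEStronglyMeasurable (fun ε => F ε (r * h ε)) (volume.restrict (Ι a b)))
    (hF_int : IntervalIntegrable (fun ε => F ε (r₀ * h ε)) volume a b)
    (hF'_meas : AEStronglyMeasurable F' (volume.restrict (Ι a b)))
    (hF_lip : ∀ ε ∈ Ι a b, LipschitzOnWith L (F ε) (ball (r₀ * h ε) δ))
    (hF_deriv : ∀ ε ∈ Ι a b, HasDerivAt (F ε) (F' ε) (r₀ * h ε)) :
    HasDerivAt (fun r => ∫ ε in a..b, F ε (r * h ε)) (∫ ε in a..b, h ε * F' ε) r₀ := by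
  obtain ⟨M, hM⟩ := (isCompact_uIcc (a := a) (b := b)).exists_bound_of_continuousOn hh.continuousOn
  set δ' := δ / (|M| + 1)
  have hmaps : ∀ ε ∈ Ι a b, MapsTo (· * h ε) (ball r₀ δ') (ball (r₀ * h ε) δ) := by
    intro ε hε r hr
    rw [mem_ball, Real.dist_eq] at hr ⊢
    calc |r * h ε - r₀ * h ε| = |r - r₀| * |h ε| := by rw [← sub_mul, abs_mul]
      _ ≤ |r - r₀| * (|M| + 1) := by
          gcongr
          linarith [hM ε (uIoc_subset_uIcc hε), le_abs_self M, Real.norm_eq_abs (h ε)]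
      _ < δ' * (|M| + 1) := by gcongr
      _ = δ := div_mul_cancel₀ _ (by positivity)
  refine (hasDerivAt_integral_of_dominated_loc_of_lip (bound := fun ε => L * |h ε|)
    (ball_mem_nhds r₀ (show 0 < δ' by positivity)) (Eventually.of_forall hF_meas) hF_int
    (hh.aestronglyMeasurable.mul hF'_meas) (ae_of_all _ fun ε hε => ?_)
    ((continuous_const.mul hh.abs).intervalIntegrable a b)
    (ae_of_all _ fun ε hε => ?_)).2
  · refine LipschitzOnWith.of_dist_le_mul fun x hx y hy => ?_
    rw [Real.coe_nnabs, abs_of_nonneg (by positivity)]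
    calc dist (F ε (x * h ε)) (F ε (y * h ε)) ≤ L * dist (x * h ε) (y * h ε) :=
          (hF_lip ε hε).dist_le_mul _ (hmaps ε hε hx) _ (hmaps ε hε hy)
      _ = L * |h ε| * dist x y := by
          rw [Real.dist_eq, Real.dist_eq, ← sub_mul, abs_mul]; ring
  · exact ((hF_deriv ε hε).comp r₀ (hasDerivAt_mul_const (h ε))).congr_deriv (mul_comm _ _)

theorem hasDerivAt_integral_integral_abs {v : ℝ → ℝ → ℝ} {h : ℝ → ℝ} {a b c d r₀ : ℝ}
    (hv : Continuous (uncurry v)) (hh : Continuous h) (hinj : ∀ ε ∈ Ι a b, InjOn (v ε) (Ι c d)) :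
    HasDerivAt (fun r => ∫ ε in a..b, ∫ s in c..d, |r * h ε + v ε s|)
      (∫ ε in a..b, h ε * ∫ s in c..d, (SignType.sign (r₀ * h ε + v ε s) : ℝ)) r₀ := by
  have hcont : ∀ r, Continuous fun ε => ∫ s in c..d, |r * h ε + v ε s| := fun r =>
    continuous_parametric_intervalIntegral_of_continuous'
      (((continuous_const.mul hh).comp continuous_fst).add hv).abs c d
  refine hasDerivAt_intervalIntegral_comp_mul (F := fun ε x => ∫ s in c..d, |x + v ε s|) hh
    one_pos (fun r => (hcont r).aestronglyMeasurable) ((hcont r₀).intervalIntegrable a b)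
    (measurable_intervalIntegral_sign_add hv (measurable_const.mul hh.measurable) c d
      ).aestronglyMeasurable
    (fun ε _ => (lipschitzWith_integral_abs_add (hv.uncurry_left ε) c d).lipschitzOnWith)
    fun ε hε => hasDerivAt_integral_abs_add (hv.uncurry_left ε) ?_
  filter_upwards [ae_imp_ne_of_injOn (hinj ε hε) (-(r₀ * h ε))] with s hs hsI
  exact fun h0 => hs hsI (by linarith)

theorem hasDerivAt_integral_mul_integral_sign {v : ℝ → ℝ → ℝ} {h : ℝ → ℝ} {a b σ : ℝ}
    (hσ : 0 < σ) (hv : Continuous (uncurry v)) (hh : Continuous h)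
    (hanti : ∀ ε ∈ Ι a b, AntitoneOn (fun s => v ε s + s) (Icc (-σ) σ))
    (hv0 : ∀ ε ∈ Ι a b, v ε 0 = 0) (hv' : ∀ ε ∈ Ι a b, HasDerivAt (v ε) (-2) 0) :
    HasDerivAt (fun r => ∫ ε in a..b, h ε * ∫ s in (-σ)..σ, (SignType.sign (r * h ε + v ε s) : ℝ))
      (∫ ε in a..b, h ε ^ 2) 0 := by
  obtain ⟨M, hM⟩ := ((isCompact_uIcc (a := a) (b := b)).image (continuous_nnnorm.comp hh)).bddAbove
  have hvc : ∀ ε, ContinuousOn (v ε) (Icc (-σ) σ) := fun ε => (hv.uncurry_left ε).continuousOn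
  have h0σ : |(0 : ℝ)| < σ := by rwa [abs_zero]
  simp only [sq]
  refine hasDerivAt_intervalIntegral_comp_mul
    (F := fun ε x => h ε * ∫ s in (-σ)..σ, (SignType.sign (x + v ε s) : ℝ)) (L := M * 2) hh hσ
    (fun r => (hh.measurable.mul (measurable_intervalIntegral_sign_add hv
      (measurable_const.mul hh.measurable) _ _)).aestronglyMeasurable)
    (intervalIntegrable_const (c := 0).congr fun ε hε => ?_) hh.aestronglyMeasurable
    (fun ε hε => ?_) fun ε hε => ?_
  · simp only [zero_mul, integral_sign_add_eq_of_antitoneOn_add_id (hanti ε hε) (hvc ε) (hv0 ε hε)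
      h0σ, neg_zero, invFunOn_zero_of_antitoneOn_add_id (hanti ε hε) (hv0 ε hε) hσ.le, mul_zero]
  · rw [zero_mul]
    refine ((lipschitzWith_smul (h ε)).comp_lipschitzOnWith
      (lipschitzOnWith_integral_sign_add_of_antitoneOn_add_id (hanti ε hε) (hvc ε) (hv0 ε hε))
      ).weaken ?_
    gcongr
    exact hM (mem_image_of_mem _ (uIoc_subset_uIcc hε))
  · rw [zero_mul]
    exact ((hasDerivAt_integral_sign_add_of_antitoneOn_add_id (hanti ε hε) (hvc ε) (hv0 ε hε) hσ
      (hv' ε hε) (by norm_num)).const_mul (h ε)).congr_deriv (by norm_num)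

theorem stmt_13 (ε₀ σ : ℝ) (hε₀ : 0 < ε₀) (hσ : 0 < σ)
    (ρ : ℝ → ℝ) (hρ : ContDiff ℝ 1 ρ)
    (v : ℝ → ℝ → ℝ) (hv : ContDiff ℝ 1 (Function.uncurry v))
    (hv0 : ∀ ε : ℝ, v ε 0 = 0) (hvs : ∀ ε : ℝ, deriv (v ε) 0 = -2) :
    ∃ σ' ∈ Set.Ioc (0:ℝ) σ,
      (∀ ε ∈ Set.Icc (-ε₀) ε₀, ∀ s ∈ Set.Icc (-σ') σ', deriv (v ε) s < 0) ∧
      ∀ A : ℝ → ℝ,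
        (∀ r : ℝ, A r = ∫ ε in (-ε₀)..ε₀, ∫ s in (-σ')..σ', |r * deriv ρ ε + v ε s|) →
        (∀ᶠ r in nhds (0:ℝ), DifferentiableAt ℝ A r) ∧
        DifferentiableAt ℝ (deriv A) 0 ∧
        deriv (deriv A) 0 = ∫ ε in (-ε₀)..ε₀, (deriv ρ ε) ^ 2 := by
  have hvd : ∀ ε, Differentiable ℝ (v ε) := fun ε =>
    (hv.differentiable one_ne_zero).comp ((differentiable_const ε).prodMk differentiable_id)
  obtain ⟨σ', hsteep, hσ'⟩ := ((eventually_forall_mem_Icc_lt isCompact_Icc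
    (continuous_uncurry_deriv hv) fun ε _ => (hvs ε).trans_lt (by norm_num : (-2 : ℝ) < -1)).and
    (Ioc_mem_nhdsGT hσ)).exists
  refine ⟨σ', hσ', fun ε hε s hs => (hsteep ε hε s hs).trans (by norm_num), fun A hA => ?_⟩
  have hεI : Ι (-ε₀) ε₀ ⊆ Icc (-ε₀) ε₀ := by
    rw [← uIcc_of_le (by linarith)]; exact uIoc_subset_uIcc
  have hanti : ∀ ε ∈ Ι (-ε₀) ε₀, AntitoneOn (fun s => v ε s + s) (Icc (-σ') σ') := fun ε hε =>
    antitoneOn_add_id_of_deriv_le (convex_Icc _ _) (hvd ε) fun s hs =>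
      (hsteep ε (hεI hε) s (interior_subset hs)).le
  have hρ' : Continuous (deriv ρ) := hρ.continuous_deriv le_rfl
  have hA' : ∀ r, HasDerivAt A (∫ ε in (-ε₀)..ε₀,
      deriv ρ ε * ∫ s in (-σ')..σ', (SignType.sign (r * deriv ρ ε + v ε s) : ℝ)) r := fun r => by
    rw [funext hA]
    exact hasDerivAt_integral_integral_abs hv.continuous hρ' fun ε hε =>
      (strictAntiOn_of_antitoneOn_add_id (hanti ε hε)).injOn.mono
        (by rw [← uIcc_of_le (by linarith [hσ'.1])]; exact uIoc_subset_uIcc)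
  have hA'' := hasDerivAt_integral_mul_integral_sign hσ'.1 hv.continuous hρ' hanti
    (fun ε _ => hv0 ε) fun ε _ => hvs ε ▸ (hvd ε 0).hasDerivAt
  rw [funext fun r => (hA' r).deriv]
  exact ⟨Eventually.of_forall fun r => (hA' r).differentiableAt, hA''.differentiableAt, hA''.deriv⟩
end

section
/- Let τ > 0, μ ∈ ℝ, i ∈ {1,2}, let v(s) = (2/√τ)·( (−2μ/√τ)·(1 − cos(√τ·s)) + (−1)^i·sin(√τ·s) ), and s_i its first positive zero. Define on (0, s_i) the function β(s) = (2·v(s)·v''(s) + 4·v(s)² − v'(s)²)/(4·v(s)² + v'(s)²). Then β(s) → −1 as s → 0⁺ and as s → s_i⁻. -/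
/-!
At a point `p` where `v p = 0` and `v' p ≠ 0`, the numerator of `β` reduces to `-v' p ^ 2` and
the denominator to `v' p ^ 2`, so `β p = -1`, and `β` is continuous at `p` since `v` is smooth.
It remains to see that both `0` and `s_i` are simple zeros of the trigonometric profile `v`:
a common zero of `A (1 - cos (k s)) + B sin (k s)` and of its derivative
`k (A sin (k s) + B cos (k s))` forces `cos (k s) = 1` when `B ≠ 0`, which is excluded on
`(0, 2π / k)`.
-/

open Real Filter Topology

noncomputable section

def shapeCoeff (v : ℝ → ℝ) (s : ℝ) : ℝ :=
  (2 * v s * deriv (deriv v) s + 4 * v s ^ 2 - deriv v s ^ 2) / (4 * v s ^ 2 + deriv v s ^ 2)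

theorem shapeCoeff_of_eq_zero {v : ℝ → ℝ} {p : ℝ} (hp : v p = 0) (hdp : deriv v p ≠ 0) :
    shapeCoeff v p = -1 := by
  rw [shapeCoeff, hp]
  field_simp
  ring

theorem tendsto_shapeCoeff_of_eq_zero {v : ℝ → ℝ} (hv : ContDiff ℝ 2 v) {p : ℝ} (hp : v p = 0)
    (hdp : deriv v p ≠ 0) : Tendsto (shapeCoeff v) (𝓝 p) (𝓝 (-1)) := by
  have hv₁ : Continuous (deriv v) := hv.continuous_deriv (by norm_num)
  have hv₂ : Continuous (deriv (deriv v)) := (hv.deriv' (n := 1)).continuous_deriv_one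
  have hden : 4 * v p ^ 2 + deriv v p ^ 2 ≠ 0 := by positivity
  have hcont : ContinuousAt (shapeCoeff v) p :=
    ((((continuous_const.mul hv.continuous).mul hv₂).add
      (continuous_const.mul (hv.continuous.pow 2))).sub (hv₁.pow 2)).continuousAt.div
      ((continuous_const.mul (hv.continuous.pow 2)).add (hv₁.pow 2)).continuousAt hden
  simpa [shapeCoeff_of_eq_zero hp hdp] using hcont.tendsto

def trigProfile (A B k s : ℝ) : ℝ :=
  A * (1 - cos (k * s)) + B * sin (k * s)

theorem contDiff_trigProfile (A B k : ℝ) {n : WithTop ℕ∞} : ContDiff ℝ n (trigProfile A B k) := by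
  unfold trigProfile
  fun_prop

theorem hasDerivAt_trigProfile (A B k s : ℝ) :
    HasDerivAt (trigProfile A B k) (k * (A * sin (k * s) + B * cos (k * s))) s := by
  have hks : HasDerivAt (fun s : ℝ => k * s) k s := by
    simpa using (hasDerivAt_id s).const_mul k
  have hcos := ((hasDerivAt_cos (k * s)).comp s hks).const_sub 1
  have hsin := (hasDerivAt_sin (k * s)).comp s hks
  exact ((hcos.const_mul A).add (hsin.const_mul B)).congr_deriv (by ring)

theorem trigProfile_zero (A B k : ℝ) : trigProfile A B k 0 = 0 := by
  simp [trigProfile]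

theorem deriv_trigProfile_zero (A B k : ℝ) : deriv (trigProfile A B k) 0 = k * B := by
  simp [(hasDerivAt_trigProfile A B k 0).deriv]

theorem deriv_trigProfile_ne_zero {A B k p : ℝ} (hB : B ≠ 0) (hk : k ≠ 0)
    (hp : trigProfile A B k p = 0) (hcos : cos (k * p) ≠ 1) :
    deriv (trigProfile A B k) p ≠ 0 := by
  rw [(hasDerivAt_trigProfile A B k p).deriv]
  intro hdp
  have hdp' : A * sin (k * p) + B * cos (k * p) = 0 := (mul_eq_zero.mp hdp).resolve_left hk
  have hpyth := sin_sq_add_cos_sq (k * p)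
  unfold trigProfile at hp
  have : B ^ 2 * (cos (k * p) - 1) = 0 := by
    linear_combination (-(B * sin (k * p))) * hp + (B * (1 - cos (k * p))) * hdp' + B ^ 2 * hpyth
  exact hcos (sub_eq_zero.mp ((mul_eq_zero.mp this).resolve_left (pow_ne_zero 2 hB)))

theorem stmt_19_general (τ μ : ℝ) (hτ : 0 < τ) (i : ℕ) (v : ℝ → ℝ)
    (hv : ∀ s : ℝ, v s = (2 / Real.sqrt τ) *
      ((-2 * μ / Real.sqrt τ) * (1 - Real.cos (Real.sqrt τ * s))
        + (-1 : ℝ) ^ i * Real.sin (Real.sqrt τ * s)))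
    (si : ℝ) (hsi : si ∈ Set.Ioo 0 (2 * π / Real.sqrt τ)) (hz : v si = 0)
    (β : ℝ → ℝ)
    (hβ : ∀ s : ℝ, β s =
      (2 * v s * deriv (deriv v) s + 4 * v s ^ 2 - (deriv v s) ^ 2)
        / (4 * v s ^ 2 + (deriv v s) ^ 2)) :
    Filter.Tendsto β (nhdsWithin 0 (Set.Ioi 0)) (nhds (-1)) ∧
    Filter.Tendsto β (nhdsWithin si (Set.Iio si)) (nhds (-1)) := by
  have hk : 0 < √τ := sqrt_pos.mpr hτ
  have hB : 2 / √τ * (-1 : ℝ) ^ i ≠ 0 := by positivity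
  obtain rfl : v = trigProfile (2 / √τ * (-2 * μ / √τ)) (2 / √τ * (-1) ^ i) √τ :=
    funext fun s => by rw [hv, trigProfile]; ring
  obtain rfl : β = shapeCoeff _ := funext hβ
  have hcos : cos (√τ * si) ≠ 1 := by
    obtain ⟨hsi₀, hsi₁⟩ := hsi
    rw [lt_div_iff₀ hk] at hsi₁
    rw [Ne, cos_eq_one_iff_of_lt_of_lt (by nlinarith [pi_pos]) (by linarith)]
    positivity
  refine ⟨?_, ?_⟩
  · refine (tendsto_shapeCoeff_of_eq_zero (contDiff_trigProfile _ _ _) (trigProfile_zero _ _ _)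
      ?_).mono_left nhdsWithin_le_nhds
    rw [deriv_trigProfile_zero]
    exact mul_ne_zero hk.ne' hB
  · exact (tendsto_shapeCoeff_of_eq_zero (contDiff_trigProfile _ _ _) hz
      (deriv_trigProfile_ne_zero hB hk.ne' hz hcos)).mono_left nhdsWithin_le_nhds

theorem stmt_19 (τ μ : ℝ) (hτ : 0 < τ) (i : ℕ) (hi : i = 1 ∨ i = 2) (v : ℝ → ℝ)
    (hv : ∀ s : ℝ, v s = (2 / Real.sqrt τ) *
      ((-2 * μ / Real.sqrt τ) * (1 - Real.cos (Real.sqrt τ * s))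
        + (-1 : ℝ) ^ i * Real.sin (Real.sqrt τ * s)))
    (si : ℝ) (hsi : si ∈ Set.Ioo 0 (2 * π / Real.sqrt τ)) (hz : v si = 0)
    (hfirst : ∀ s ∈ Set.Ioo 0 si, v s ≠ 0)
    (β : ℝ → ℝ)
    (hβ : ∀ s : ℝ, β s =
      (2 * v s * deriv (deriv v) s + 4 * v s ^ 2 - (deriv v s) ^ 2)
        / (4 * v s ^ 2 + (deriv v s) ^ 2)) :
    Filter.Tendsto β (nhdsWithin 0 (Set.Ioi 0)) (nhds (-1)) ∧
    Filter.Tendsto β (nhdsWithin si (Set.Iio si)) (nhds (-1)) :=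
  stmt_19_general τ μ hτ i v hv si hsi hz β hβ
end
end
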